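/- arXiv:2504.02977 — 2 statements merged into one kernel-verified Lean document; each statement's English description precedes it below -/
import Mathlib

section
/- Let Ĝ be a looping of a finite simple graph G, let 𝒜 be the zero-nonzero pattern of the (looped) adjacency of Ĝ, and let R and C be subsets of V(G) with |R|=|C|. Then the submatrix 𝒜[R,C] is a triangle if and only if V(G)∖C is a loop zero forcing set for Ĝ from which R can be the set of vertices that force. -/
/-!  Common definitions: zero forcing (standard, loop, positive semidefinite),
zero-nonzero patterns, triangles, and related graph parameters. -/

variable {V : Type*}

/-- Standard zero forcing rule: with filled set `S`, the filled vertex `v` can force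
its unique unfilled neighbor `u`. -/
def StdForce (G : SimpleGraph V) (S : Set V) (v u : V) : Prop :=
  v ∈ S ∧ u ∉ S ∧ G.Adj v u ∧ ∀ w, G.Adj v w → w ∉ S → w = u

/-- Adjacency in the looping of `G` with loops at the vertices in `L`
(a vertex counts as its own neighbor iff it has a loop). -/
def LoopAdj (G : SimpleGraph V) (L : Set V) (v w : V) : Prop :=
  G.Adj v w ∨ (v = w ∧ v ∈ L)

/-- Loop zero forcing rule (the forcing vertex need not be filled): `v` can force `u`
if `u` is the only unfilled neighbor of `v` in the looping. -/
def LoopForce (G : SimpleGraph V) (L : Set V) (S : Set V) (v u : V) : Prop :=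
  u ∉ S ∧ LoopAdj G L v u ∧ ∀ w, LoopAdj G L v w → w ∉ S → w = u

/-- Positive semidefinite zero forcing rule: the filled vertex `v` can force the unfilled
vertex `u` if `u` is the only neighbor of `v` in the connected component of `u` of the
subgraph induced by the unfilled vertices. -/
def PsdForce (G : SimpleGraph V) (S : Set V) (v u : V) : Prop :=
  v ∈ S ∧ u ∉ S ∧ G.Adj v u ∧
    ∀ w, G.Adj v w → w ∉ S →
      Relation.ReflTransGen (fun a b => G.Adj a b ∧ a ∉ S ∧ b ∉ S) u w → w = u

/-- The vertices performing a force in a forcing sequence. -/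
def sourcesOf (seq : List (V × V)) : Set V := {v | ∃ p ∈ seq, p.1 = v}

/-- The vertices that get forced in a forcing sequence. -/
def targetsOf (seq : List (V × V)) : Set V := {u | ∃ p ∈ seq, p.2 = u}

/-- The filled set after performing all forces of `seq` starting from `F`. -/
def filledAfter (F : Set V) (seq : List (V × V)) : Set V := F ∪ targetsOf seq

/-- `ValidSeq rule seq F`: starting with `F` as the filled set, the sequence of forces
`seq` is permitted (each force in turn is allowed by `rule`, and each vertex forces
at most once). -/
def ValidSeq (rule : Set V → V → V → Prop) : List (V × V) → Set V → Prop
  | [], _ => True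
  | (v, u) :: rest, F => rule F v u ∧ (∀ p ∈ rest, p.1 ≠ v) ∧ ValidSeq rule rest (insert u F)

/-- `F` is a zero forcing set w.r.t. the forcing rule `rule`. -/
def IsZFSet (rule : Set V → V → V → Prop) (F : Set V) : Prop :=
  ∃ seq : List (V × V), ValidSeq rule seq F ∧ filledAfter F seq = Set.univ

/-- `F` is a zero forcing set (w.r.t. `rule`) from which `R` can be the set of vertices
that force: some (automatically complete) forcing sequence from `F` fills every vertex
and the set of vertices performing a force is exactly `R`. -/
def ForcesWith (rule : Set V → V → V → Prop) (F R : Set V) : Prop :=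
  ∃ seq : List (V × V), ValidSeq rule seq F ∧ filledAfter F seq = Set.univ ∧
    sourcesOf seq = R

/-- The zero forcing number w.r.t. a forcing rule. -/
noncomputable def Znum (rule : Set V → V → V → Prop) : ℕ :=
  sInf {n | ∃ F : Set V, IsZFSet rule F ∧ F.ncard = n}

/-- The (standard) zero forcing number `Z(G)`. -/
noncomputable def Z (G : SimpleGraph V) : ℕ := Znum (StdForce G)

/-- The zero forcing number of the looping of `G` with loops at `L`. -/
noncomputable def Zloop (G : SimpleGraph V) (L : Set V) : ℕ := Znum (LoopForce G L)

/-- The positive semidefinite zero forcing number `Z₊(G)`. -/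
noncomputable def Zplus (G : SimpleGraph V) : ℕ := Znum (PsdForce G)

/-- The enhanced zero forcing number `Ẑ(G)`: the maximum over all loopings of `G` of the
zero forcing number of the looping. -/
noncomputable def Zhat (G : SimpleGraph V) : ℕ := sSup {n | ∃ L : Set V, Zloop G L = n}

/-- `F` is a direct zero forcing set for `G`: some forcing sequence from `F` fills every
vertex and every vertex that performs a force belongs to `F`. -/
def IsDirectZFSet (G : SimpleGraph V) (F : Set V) : Prop :=
  ∃ seq : List (V × V), ValidSeq (StdForce G) seq F ∧ filledAfter F seq = Set.univ ∧
    sourcesOf seq ⊆ F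

/-- The direct zero forcing number `Z_d(G)`. -/
noncomputable def Zd (G : SimpleGraph V) : ℕ :=
  sInf {n | ∃ F : Set V, IsDirectZFSet G F ∧ F.ncard = n}

/-- A zero-nonzero pattern `Y` (entry `Y i j` means the `(i,j)` entry is `*`)
has a `k × k` submatrix that is a triangle. -/
def HasTriOfSize {ρ γ : Type*} (Y : ρ → γ → Prop) (k : ℕ) : Prop :=
  ∃ (r : Fin k → ρ) (c : Fin k → γ), Function.Injective r ∧ Function.Injective c ∧
    (∀ i, Y (r i) (c i)) ∧ ∀ i j : Fin k, i < j → ¬ Y (r i) (c j)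

/-- The triangle number `tri(Y)` of a zero-nonzero pattern. -/
noncomputable def tri {ρ γ : Type*} (Y : ρ → γ → Prop) : ℕ := sSup {k | HasTriOfSize Y k}

/-- Membership in `S_znz(G)`: off the diagonal, the pattern matches the adjacency of `G`. -/
def InSznz (G : SimpleGraph V) (A : V → V → Prop) : Prop :=
  ∀ i j : V, i ≠ j → (A i j ↔ G.Adj i j)

/-- The zero-nonzero pattern of the looping of `G` with loops at `L`. -/
def loopPattern (G : SimpleGraph V) (L : Set V) : V → V → Prop :=
  fun i j => (i = j ∧ i ∈ L) ∨ (i ≠ j ∧ G.Adj i j)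

/-- The submatrix of the pattern `Y` with rows `R` and columns `C` is a triangle:
there are enumerations of `R` and `C` realizing a lower-triangular pattern with `*`
diagonal (in particular `|R| = |C|`). -/
def SubIsTriangle {ρ γ : Type*} (Y : ρ → γ → Prop) (R : Finset ρ) (C : Finset γ) : Prop :=
  ∃ (k : ℕ) (r : Fin k → ρ) (c : Fin k → γ),
    Function.Injective r ∧ Function.Injective c ∧
    (∀ x : ρ, x ∈ R ↔ ∃ i, r i = x) ∧ (∀ y : γ, y ∈ C ↔ ∃ i, c i = y) ∧
    (∀ i, Y (r i) (c i)) ∧ ∀ i j : Fin k, i < j → ¬ Y (r i) (c j)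

/-- `(R, C)` is a persistent triangle of `G`. -/
def PersistentTriangle (G : SimpleGraph V) (R C : Finset V) : Prop :=
  ∀ A : V → V → Prop, InSznz G A → SubIsTriangle A R C

/-- `F` is a direct zero forcing set for `G` from which `R` can be the set of vertices
that force. -/
def DirectForcesWith (G : SimpleGraph V) (F R : Set V) : Prop :=
  ∃ seq : List (V × V), ValidSeq (StdForce G) seq F ∧ filledAfter F seq = Set.univ ∧
    sourcesOf seq = R ∧ R ⊆ F

/-- `(range r, range c)` is a partition of `G` according to the `m × n` pattern `Y`,
with labelings given by `r` and `c`. -/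
def PartitionAccording (G : SimpleGraph V) {m n : ℕ} (Y : Fin m → Fin n → Prop)
    (r : Fin m → V) (c : Fin n → V) : Prop :=
  Function.Injective r ∧ Function.Injective c ∧ (∀ i j, r i ≠ c j) ∧
    (∀ v : V, (∃ i, r i = v) ∨ (∃ j, c j = v)) ∧
    ∀ i j, G.Adj (r i) (c j) ↔ Y i j

/-- `F` is a zero forcing set for `G` that forces from `V1` to `V2`. -/
def ForcesFromTo (G : SimpleGraph V) (F V1 V2 : Set V) : Prop :=
  V1 ⊆ F ∧ ∃ seq : List (V × V), ValidSeq (StdForce G) seq F ∧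
    filledAfter F seq = Set.univ ∧ sourcesOf seq ⊆ V1 ∧ targetsOf seq ⊆ V2

/-- `(V1, V2)` is a partition of the vertex set of `G` into two cliques. -/
def IsCliquePartition (G : SimpleGraph V) (V1 V2 : Set V) : Prop :=
  Disjoint V1 V2 ∧ V1 ∪ V2 = Set.univ ∧ G.IsClique V1 ∧ G.IsClique V2

/-- `G` is cobipartite. -/
def Cobipartite (G : SimpleGraph V) : Prop := ∃ V1 V2 : Set V, IsCliquePartition G V1 V2

/-- `G` is the cobipartite graph associated with the pattern `Y`, via labelings `r`, `c`. -/
def CobipAssociated (G : SimpleGraph V) {m n : ℕ} (Y : Fin m → Fin n → Prop)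
    (r : Fin m → V) (c : Fin n → V) : Prop :=
  PartitionAccording G Y r c ∧ G.IsClique (Set.range r) ∧ G.IsClique (Set.range c)

/-- `z` is a critical vertex: some optimal forcing sequence neither lets `z` force
nor forces `z`. -/
def Critical (G : SimpleGraph V) (z : V) : Prop :=
  ∃ (F : Set V) (seq : List (V × V)), F.ncard = Z G ∧ ValidSeq (StdForce G) seq F ∧
    filledAfter F seq = Set.univ ∧ z ∉ sourcesOf seq ∧ z ∉ targetsOf seq

/-- `z` is an uncritical vertex: in every optimal forcing sequence, exactly one of the
following holds: `z` performs a force, or `z` gets forced. -/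
def Uncritical (G : SimpleGraph V) (z : V) : Prop :=
  ∀ (F : Set V) (seq : List (V × V)), F.ncard = Z G → ValidSeq (StdForce G) seq F →
    filledAfter F seq = Set.univ → (z ∈ sourcesOf seq ↔ z ∉ targetsOf seq)

/-- The maximum nullity `M(G)` over the field `𝔽`. -/
noncomputable def Mnum (𝔽 : Type*) [Field 𝔽] [Fintype V] [DecidableEq V]
    (G : SimpleGraph V) : ℕ :=
  sSup {k | ∃ A : Matrix V V 𝔽, A.IsSymm ∧ (∀ i j : V, i ≠ j → (A i j ≠ 0 ↔ G.Adj i j)) ∧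
    k = Fintype.card V - A.rank}

/-- The minimum rank `mr_𝔽(Y)` of a zero-nonzero pattern over the field `𝔽`. -/
noncomputable def mr (𝔽 : Type*) [Field 𝔽] {m n : ℕ} (Y : Fin m → Fin n → Prop) : ℕ :=
  sInf {k | ∃ A : Matrix (Fin m) (Fin n) 𝔽, (∀ i j, A i j ≠ 0 ↔ Y i j) ∧ A.rank = k}

/-- `G` is a `k`-tree: there is a construction ordering of the vertices in which the
first `k+1` vertices form a clique and every later vertex is adjacent among the earlier
vertices to exactly a `k`-clique. -/
def IsKTree (k : ℕ) [Fintype V] (G : SimpleGraph V) : Prop :=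
  k + 1 ≤ Fintype.card V ∧ ∃ ord : V ≃ Fin (Fintype.card V),
    (∀ u v : V, (ord u : ℕ) < k + 1 → (ord v : ℕ) < k + 1 → u ≠ v → G.Adj u v) ∧
    ∀ v : V, k + 1 ≤ (ord v : ℕ) →
      G.IsClique {u : V | (ord u : ℕ) < (ord v : ℕ) ∧ G.Adj u v} ∧
      {u : V | (ord u : ℕ) < (ord v : ℕ) ∧ G.Adj u v}.ncard = k

/-!
Record a forcing sequence from `V(G) ∖ C` as its list of forces `(rᵢ, cᵢ)`. If it fills every
vertex, the vertices still unfilled before force `i` are exactly `cᵢ, cᵢ₊₁, …`, so "`cᵢ` is the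
only unfilled neighbour of `rᵢ`" says exactly that entry `(rᵢ, cᵢ)` is `*` and the entries
`(rᵢ, cⱼ)`, `j > i`, are `0`. Thus the forces enumerate `𝒜[R, C]` in lower-triangular form, and
every such enumeration is a complete forcing sequence.
-/

/-- `LoopForce G L` is `PatternForce (LoopAdj G L)` by definition. -/
def PatternForce (A : V → V → Prop) (S : Set V) (v u : V) : Prop :=
  u ∉ S ∧ A v u ∧ ∀ w, A v w → w ∉ S → w = u

/-- The pairs `(rᵢ, cᵢ)` list the rows and columns of a triangle of `Y` in lower-triangular
order. -/
def IsTriangleList {ρ γ : Type*} (Y : ρ → γ → Prop) (seq : List (ρ × γ)) : Prop :=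
  (seq.map Prod.fst).Nodup ∧ (seq.map Prod.snd).Nodup ∧ (∀ p ∈ seq, Y p.1 p.2) ∧
    seq.Pairwise (fun p q => ¬ Y p.1 q.2)

lemma subIsTriangle_iff_exists_isTriangleList {ρ γ : Type*} (Y : ρ → γ → Prop)
    (R : Finset ρ) (C : Finset γ) :
    SubIsTriangle Y R C ↔ ∃ seq : List (ρ × γ), IsTriangleList Y seq ∧
      (∀ x, x ∈ R ↔ x ∈ seq.map Prod.fst) ∧ ∀ y, y ∈ C ↔ y ∈ seq.map Prod.snd := by
  simp only [List.exists_iff_exists_tuple, IsTriangleList, SubIsTriangle, List.map_ofFn,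
    List.nodup_ofFn, List.forall_mem_ofFn_iff, List.pairwise_ofFn]
  simp only [List.mem_ofFn]
  constructor
  · rintro ⟨k, r, c, hr, hc, hR, hC, hdiag, hoff⟩
    exact ⟨k, fun i => (r i, c i), ⟨hr, hc, hdiag, hoff⟩, hR, hC⟩
  · rintro ⟨k, f, ⟨hr, hc, hdiag, hoff⟩, hR, hC⟩
    exact ⟨k, _, _, hr, hc, hR, hC, hdiag, hoff⟩

lemma mem_targetsOf_iff_mem_map {seq : List (V × V)} {x : V} :
    x ∈ targetsOf seq ↔ x ∈ seq.map Prod.snd := by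
  simp [targetsOf]

lemma mem_sourcesOf_iff_mem_map {seq : List (V × V)} {x : V} :
    x ∈ sourcesOf seq ↔ x ∈ seq.map Prod.fst := by
  simp [sourcesOf]

lemma targetsOf_cons (p : V × V) (seq : List (V × V)) :
    targetsOf (p :: seq) = insert p.2 (targetsOf seq) := by
  ext x
  simp [mem_targetsOf_iff_mem_map, eq_comm]

lemma validSeq_patternForce_iff (A : V → V → Prop) {F : Set V} {seq : List (V × V)}
    (hfill : Fᶜ ⊆ targetsOf seq) :
    ValidSeq (PatternForce A) seq F ↔ IsTriangleList A seq ∧ Disjoint (targetsOf seq) F := by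
  induction seq generalizing F with
  | nil => simp [ValidSeq, IsTriangleList, targetsOf]
  | cons p seq ih =>
    obtain ⟨v, u⟩ := p
    rw [targetsOf_cons] at hfill ⊢
    have hfill' : (insert u F)ᶜ ⊆ targetsOf seq := fun w hw =>
      (hfill fun hwF => hw (Or.inr hwF)).resolve_left fun hwu => hw (Or.inl hwu)
    simp only [ValidSeq, ih hfill', IsTriangleList, PatternForce, List.map_cons, List.nodup_cons,
      List.forall_mem_cons, List.pairwise_cons, Set.disjoint_insert_left,
      Set.disjoint_insert_right, ← mem_targetsOf_iff_mem_map, ← mem_sourcesOf_iff_mem_map]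
    constructor
    · rintro ⟨⟨huF, hvu, huniq⟩, hsrc, ⟨hfst, hsnd, hdiag, hpair⟩, huT, hTF⟩
      refine ⟨⟨⟨?_, hfst⟩, ⟨huT, hsnd⟩, ⟨hvu, hdiag⟩, ?_, hpair⟩, huF, hTF⟩
      · exact fun ⟨q, hq, hqv⟩ => hsrc q hq hqv
      · intro q hq hvq
        have hqF : q.2 ∉ F := Set.disjoint_left.mp hTF ⟨q, hq, rfl⟩
        exact huT (huniq q.2 hvq hqF ▸ ⟨q, hq, rfl⟩)
    · rintro ⟨⟨⟨hvS, hfst⟩, ⟨huT, hsnd⟩, ⟨hvu, hdiag⟩, hrow, hpair⟩, huF, hTF⟩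
      refine ⟨⟨huF, hvu, fun w hvw hwF => ?_⟩, fun q hq hqv => hvS ⟨q, hq, hqv⟩,
        ⟨hfst, hsnd, hdiag, hpair⟩, huT, hTF⟩
      obtain rfl | ⟨q, hq, rfl⟩ := hfill hwF
      · rfl
      · exact absurd hvw (hrow q hq)

theorem subIsTriangle_iff_forcesWith [Fintype V] [DecidableEq V] (A : V → V → Prop)
    (R C : Finset V) :
    SubIsTriangle A R C ↔ ForcesWith (PatternForce A) (↑(Cᶜ) : Set V) (↑R : Set V) := by
  rw [subIsTriangle_iff_exists_isTriangleList]
  constructor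
  · rintro ⟨seq, htri, hR, hC⟩
    have hsources : sourcesOf seq = ↑R := by ext x; simp [mem_sourcesOf_iff_mem_map, hR]
    have htargets : targetsOf seq = ↑C := by ext y; simp [mem_targetsOf_iff_mem_map, hC]
    refine ⟨seq, (validSeq_patternForce_iff A ?_).mpr ⟨htri, ?_⟩, ?_, hsources⟩
    · simp [htargets]
    · rw [htargets, Finset.coe_compl]
      exact disjoint_compl_right
    · simp [filledAfter, htargets]
  · rintro ⟨seq, hvalid, hfill, hsources⟩
    have hcover : (↑Cᶜ : Set V)ᶜ ⊆ targetsOf seq := fun w hw =>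
      (hfill ▸ Set.mem_univ w : w ∈ filledAfter _ seq).resolve_left hw
    obtain ⟨htri, hdisj⟩ := (validSeq_patternForce_iff A hcover).mp hvalid
    have htargets : targetsOf seq = ↑C := by
      simpa using hdisj.subset_compl_right.antisymm hcover
    refine ⟨seq, htri, fun x => ?_, fun y => ?_⟩
    · rw [← mem_sourcesOf_iff_mem_map, hsources, Finset.mem_coe]
    · rw [← mem_targetsOf_iff_mem_map, htargets, Finset.mem_coe]

lemma loopPattern_eq_loopAdj (G : SimpleGraph V) (L : Set V) : loopPattern G L = LoopAdj G L := by
  ext v w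
  by_cases h : v = w <;> simp [loopPattern, LoopAdj, h]

theorem subtriangle_iff_loop_forcing_general
    {V : Type*} [Fintype V] [DecidableEq V] (G : SimpleGraph V) (L : Set V)
    (R C : Finset V) :
    SubIsTriangle (loopPattern G L) R C ↔
      ForcesWith (LoopForce G L) (↑(Cᶜ) : Set V) (↑R : Set V) := by
  rw [loopPattern_eq_loopAdj]
  exact subIsTriangle_iff_forcesWith (LoopAdj G L) R C

/-- For a looping of `G` with loops at `L` and `R, C ⊆ V(G)` with
`|R| = |C|`, the submatrix `𝒜[R,C]` of the pattern of the looping is a triangle iff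
`V(G) \\ C` is a loop zero forcing set from which `R` can be the set of vertices
that force. -/
theorem subtriangle_iff_loop_forcing
    {V : Type*} [Fintype V] [DecidableEq V] (G : SimpleGraph V) (L : Set V)
    (R C : Finset V) (hRC : R.card = C.card) :
    SubIsTriangle (loopPattern G L) R C ↔
      ForcesWith (LoopForce G L) (↑(Cᶜ) : Set V) (↑R : Set V) :=
  subtriangle_iff_loop_forcing_general G L R C
end

section
/- Let G be a finite simple graph. Then |V(G)| − Z_d(G) equals the size of a largest immutable triangle of G. -/
/-!  Common definitions: zero forcing (standard, loop, positive semidefinite),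
zero-nonzero patterns, triangles, and related graph parameters. -/

variable {V : Type*}

/-!
A forcing sequence `(v₁ → u₁), …, (v_k → u_k)` lists the diagonal of a triangle of the
adjacency pattern with rows `vᵢ` and columns `uᵢ`: when `vᵢ` forces, every `uⱼ` with `j > i` is
still unfilled, so `vᵢ` is not adjacent to it. If the sequence is direct from `F`, the rows lie in
`F` and the columns outside it, so no diagonal entry of a pattern in `S_znz(G)` ever enters this
triangle: it is immutable, and its columns are exactly the `|V| - |F|` vertices outside `F`.
Conversely, the triangle of an immutable triangle `(R, C)` in the pattern with zero diagonal, read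
row by row, is a direct forcing sequence from the complement of `C`.
-/

section Triangle

variable {ρ γ : Type*}

/-- The positions of the diagonal of a triangle of `Y`, listed from the top row down. -/
def IsTriangleDiagonal (Y : ρ → γ → Prop) (l : List (ρ × γ)) : Prop :=
  (l.map Prod.fst).Nodup ∧ (l.map Prod.snd).Nodup ∧ (∀ p ∈ l, Y p.1 p.2) ∧
    l.Pairwise fun p q => ¬ Y p.1 q.2

variable {Y Y' : ρ → γ → Prop}

theorem isTriangleDiagonal_cons {p : ρ × γ} {l : List (ρ × γ)} :
    IsTriangleDiagonal Y (p :: l) ↔ (∀ q ∈ l, q.1 ≠ p.1) ∧ (∀ q ∈ l, q.2 ≠ p.2) ∧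
      Y p.1 p.2 ∧ (∀ q ∈ l, ¬ Y p.1 q.2) ∧ IsTriangleDiagonal Y l := by
  simp only [IsTriangleDiagonal, List.map_cons, List.nodup_cons, List.mem_map,
    List.forall_mem_cons, List.pairwise_cons, not_exists, not_and]
  grind

theorem isTriangleDiagonal_ofFn_iff {k : ℕ} {r : Fin k → ρ} {c : Fin k → γ} :
    IsTriangleDiagonal Y (List.ofFn fun i => (r i, c i)) ↔
      Function.Injective r ∧ Function.Injective c ∧ (∀ i, Y (r i) (c i)) ∧
        ∀ i j, i < j → ¬ Y (r i) (c j) := by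
  simp only [IsTriangleDiagonal, List.map_ofFn, List.nodup_ofFn, List.forall_mem_ofFn_iff,
    List.pairwise_ofFn]
  rfl

theorem IsTriangleDiagonal.congr {l : List (ρ × γ)} (hl : IsTriangleDiagonal Y l)
    (hY : ∀ p ∈ l, ∀ q ∈ l, Y' p.1 q.2 ↔ Y p.1 q.2) : IsTriangleDiagonal Y' l :=
  ⟨hl.1, hl.2.1, fun p hp => (hY p hp p hp).2 (hl.2.2.1 p hp),
    hl.2.2.2.imp_of_mem fun hp hq h => mt (hY _ hp _ hq).1 h⟩

theorem subIsTriangle_iff_exists_isTriangleDiagonal [DecidableEq ρ] [DecidableEq γ]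
    {R : Finset ρ} {C : Finset γ} :
    SubIsTriangle Y R C ↔ ∃ l, IsTriangleDiagonal Y l ∧
      (l.map Prod.fst).toFinset = R ∧ (l.map Prod.snd).toFinset = C := by
  constructor
  · rintro ⟨k, r, c, hr, hc, hR, hC, hdiag, hoff⟩
    refine ⟨List.ofFn fun i => (r i, c i), isTriangleDiagonal_ofFn_iff.2 ⟨hr, hc, hdiag, hoff⟩,
      ?_, ?_⟩ <;> ext <;> simp [List.mem_ofFn, hR, hC]
  · rintro ⟨l, hl, rfl, rfl⟩
    obtain ⟨k, r, c, rfl⟩ : ∃ (k : ℕ) (r : Fin k → ρ) (c : Fin k → γ),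
        l = List.ofFn fun i => (r i, c i) :=
      ⟨_, fun i => l[i].1, fun i => l[i].2, by simp⟩
    obtain ⟨hr, hc, hdiag, hoff⟩ := isTriangleDiagonal_ofFn_iff.1 hl
    exact ⟨k, r, c, hr, hc, by simp [List.mem_ofFn], by simp [List.mem_ofFn], hdiag, hoff⟩

end Triangle

section Forcing

variable {G : SimpleGraph V}

theorem filledAfter_cons (F : Set V) (p : V × V) (l : List (V × V)) :
    filledAfter F (p :: l) = filledAfter (insert p.2 F) l := by
  ext x
  simp only [filledAfter, targetsOf, Set.mem_union, Set.mem_insert_iff, Set.mem_ofPred_eq,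
    List.mem_cons, exists_eq_or_imp]
  tauto

theorem sourcesOf_eq_coe_toFinset [DecidableEq V] (l : List (V × V)) :
    sourcesOf l = ↑(l.map Prod.fst).toFinset := by
  ext; simp [sourcesOf]

theorem targetsOf_eq_coe_toFinset [DecidableEq V] (l : List (V × V)) :
    targetsOf l = ↑(l.map Prod.snd).toFinset := by
  ext; simp [targetsOf]

theorem ValidSeq.snd_notMem :
    ∀ {seq : List (V × V)} {F : Set V}, ValidSeq (StdForce G) seq F → ∀ p ∈ seq, p.2 ∉ F
  | (_, _) :: _, _, ⟨hforce, _, hrest⟩, _, hp => by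
    rcases List.mem_cons.1 hp with rfl | hp
    · exact hforce.2.1
    · exact fun h => hrest.snd_notMem _ hp (Set.mem_insert_of_mem _ h)

theorem ValidSeq.isTriangleDiagonal :
    ∀ {seq : List (V × V)} {F : Set V}, ValidSeq (StdForce G) seq F →
      IsTriangleDiagonal G.Adj seq
  | [], _, _ => by simp [IsTriangleDiagonal]
  | (v, u) :: rest, F, ⟨⟨_, _, hadj, hunique⟩, hfst, hrest⟩ => by
    have hlater : ∀ q ∈ rest, q.2 ∉ insert u F := hrest.snd_notMem
    refine isTriangleDiagonal_cons.2 ⟨hfst, fun q hq h => hlater q hq (h ▸ Set.mem_insert u F),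
      hadj, fun q hq hvq => ?_, hrest.isTriangleDiagonal⟩
    have hqF : q.2 ∉ F := fun h => hlater q hq (Set.mem_insert_of_mem _ h)
    exact hlater q hq (hunique _ hvq hqF ▸ Set.mem_insert u F)

theorem validSeq_of_isTriangleDiagonal :
    ∀ {seq : List (V × V)} {F : Set V}, IsTriangleDiagonal G.Adj seq →
      (∀ p ∈ seq, p.1 ∈ F) → (∀ p ∈ seq, p.2 ∉ F) → filledAfter F seq = Set.univ →
      ValidSeq (StdForce G) seq F
  | [], _, _, _, _, _ => trivial
  | (v, u) :: rest, F, hl, hsrc, htgt, hfill => by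
    obtain ⟨hfst, hsnd, hadj, habove, hl⟩ := isTriangleDiagonal_cons.1 hl
    refine ⟨⟨hsrc _ List.mem_cons_self, htgt _ List.mem_cons_self, hadj, fun w hvw hwF => ?_⟩,
      hfst, validSeq_of_isTriangleDiagonal hl
        (fun p hp => Set.mem_insert_of_mem _ (hsrc p (List.mem_cons_of_mem _ hp)))
        (fun p hp h => (Set.mem_insert_iff.1 h).elim (hsnd p hp)
          (htgt p (List.mem_cons_of_mem _ hp)))
        ((filledAfter_cons F (v, u) rest).symm.trans hfill)⟩
    have hw : w ∈ filledAfter F ((v, u) :: rest) := hfill ▸ Set.mem_univ w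
    rw [filledAfter_cons] at hw
    rcases hw with (rfl | hw) | ⟨q, hq, rfl⟩
    · rfl
    · exact absurd hw hwF
    · exact absurd hvw (habove q hq)

theorem persistentTriangle_of_isTriangleDiagonal [DecidableEq V] {l : List (V × V)}
    (hl : IsTriangleDiagonal G.Adj l) (hne : ∀ p ∈ l, ∀ q ∈ l, p.1 ≠ q.2) :
    PersistentTriangle G (l.map Prod.fst).toFinset (l.map Prod.snd).toFinset := fun _ hA =>
  subIsTriangle_iff_exists_isTriangleDiagonal.2
    ⟨l, hl.congr fun p hp q hq => hA _ _ (hne p hp q hq), rfl, rfl⟩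

theorem PersistentTriangle.isDirectZFSet_compl {R C : Finset V}
    (hT : PersistentTriangle G R C) (hRC : Disjoint R C) : IsDirectZFSet G (↑C)ᶜ := by
  classical
  obtain ⟨l, hl, rfl, rfl⟩ :=
    subIsTriangle_iff_exists_isTriangleDiagonal.1 (hT G.Adj fun _ _ _ => Iff.rfl)
  have hfill : filledAfter (↑(l.map Prod.snd).toFinset)ᶜ l = Set.univ := by
    rw [filledAfter, targetsOf_eq_coe_toFinset, Set.compl_union_self]
  have hsrc : sourcesOf l ⊆ (↑(l.map Prod.snd).toFinset)ᶜ := by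
    rw [sourcesOf_eq_coe_toFinset, Set.subset_compl_iff_disjoint_right]
    exact Finset.disjoint_coe.2 hRC
  refine ⟨l, validSeq_of_isTriangleDiagonal hl (fun p hp => hsrc ⟨p, hp, rfl⟩)
    (fun p hp h => h (List.mem_toFinset.2 (List.mem_map_of_mem hp))) hfill, hfill, hsrc⟩

theorem IsDirectZFSet.exists_immutableTriangle {F : Set V} (hF : IsDirectZFSet G F) :
    ∃ R C : Finset V, R.card = C.card ∧ PersistentTriangle G R C ∧ Disjoint R C ∧
      (↑C : Set V)ᶜ = F := by
  classical
  obtain ⟨seq, hseq, hfill, hsrc⟩ := hF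
  have hl := hseq.isTriangleDiagonal
  have hne : ∀ p ∈ seq, ∀ q ∈ seq, p.1 ≠ q.2 := fun p hp q hq h =>
    hseq.snd_notMem q hq (h ▸ hsrc ⟨p, hp, rfl⟩)
  have hdisj : Disjoint F (targetsOf seq) := Set.disjoint_left.2 fun x hx ⟨q, hq, hqx⟩ =>
    hseq.snd_notMem q hq (hqx ▸ hx)
  refine ⟨(seq.map Prod.fst).toFinset, (seq.map Prod.snd).toFinset, ?_,
    persistentTriangle_of_isTriangleDiagonal hl hne, ?_, ?_⟩
  · rw [List.toFinset_card_of_nodup hl.1, List.toFinset_card_of_nodup hl.2.1,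
      List.length_map, List.length_map]
  · simp only [Finset.disjoint_left, List.mem_toFinset, List.mem_map]
    rintro _ ⟨p, hp, rfl⟩ ⟨q, hq, hqp⟩
    exact hne p hp q hq hqp.symm
  · rw [← targetsOf_eq_coe_toFinset]
    exact (IsCompl.of_eq hdisj.symm.eq_bot (by rw [sup_comm]; exact hfill)).compl_eq

theorem isDirectZFSet_univ (G : SimpleGraph V) : IsDirectZFSet G Set.univ :=
  ⟨[], trivial, Set.univ_union _, Set.subset_univ _⟩

theorem zd_le_ncard {F : Set V} (hF : IsDirectZFSet G F) : Zd G ≤ F.ncard :=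
  Nat.sInf_le ⟨F, hF, rfl⟩

theorem exists_isDirectZFSet_ncard_eq_zd (G : SimpleGraph V) :
    ∃ F, IsDirectZFSet G F ∧ F.ncard = Zd G :=
  Nat.sInf_mem (s := {n | ∃ F, IsDirectZFSet G F ∧ F.ncard = n})
    ⟨_, _, isDirectZFSet_univ G, rfl⟩

end Forcing

theorem card_sub_Zd_eq_max_immutable_triangle_general
    {V : Type*} [Fintype V] (G : SimpleGraph V) :
    Fintype.card V - Zd G =
      sSup {k | ∃ R C : Finset V, R.card = k ∧ C.card = k ∧
        PersistentTriangle G R C ∧ Disjoint R C} := by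
  classical
  have ncard_compl (C : Finset V) : ((↑C : Set V)ᶜ).ncard = Fintype.card V - C.card := by
    rw [← Finset.coe_compl, Set.ncard_coe_finset, Finset.card_compl]
  refine (IsGreatest.csSup_eq ⟨?_, ?_⟩).symm
  · obtain ⟨F, hF, hFcard⟩ := exists_isDirectZFSet_ncard_eq_zd G
    obtain ⟨R, C, hcard, hT, hRC, rfl⟩ := hF.exists_immutableTriangle
    have hC : Fintype.card V - Zd G = C.card := by
      have := C.card_le_univ
      rw [← hFcard, ncard_compl]
      omega
    exact ⟨R, C, hcard.trans hC.symm, hC.symm, hT, hRC⟩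
  · rintro _ ⟨R, C, -, rfl, hT, hRC⟩
    have hZd := zd_le_ncard (hT.isDirectZFSet_compl hRC)
    have := C.card_le_univ
    rw [ncard_compl] at hZd
    omega

/-- `|V(G)| − Z_d(G)` equals the size of a largest immutable triangle
of `G`. -/
theorem card_sub_Zd_eq_max_immutable_triangle
    {V : Type*} [Fintype V] [DecidableEq V] (G : SimpleGraph V) :
    Fintype.card V - Zd G =
      sSup {k | ∃ R C : Finset V, R.card = k ∧ C.card = k ∧
        PersistentTriangle G R C ∧ Disjoint R C} :=
  card_sub_Zd_eq_max_immutable_triangle_general G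
end
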